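/- arXiv:2001.02583 — 4 statements merged into one kernel-verified Lean document; each statement's English description precedes it below -/
import Mathlib

section
/- Let z, ν ∈ ℝ and let Φ : ℤ → ℝ be any real sequence. Define Ψ_j := (A(z)Φ)_j = Φ_j − z·(Φ_{j+1} − Φ_{j−1})/2 + (ν/2)·(Φ_{j−1} − 2Φ_j + Φ_{j+1}). Then for every j ∈ ℤ one has the integration-by-parts decomposition Ψ_j² = Φ_j² + T_j − T_{j−1} + S_j, where T_j := −z·Φ_j² + (ν − z)·Φ_j·(Φ_{j+1} − Φ_j) + (ν(1 − z)/2)·(Φ_{j+1} − Φ_j)², and S_j := (−(ν − z²)/2)·((Φ_j − Φ_{j−1})² + (Φ_{j+1} − Φ_j)²) + ((ν² − z²)/4)·(Φ_{j+1} − 2Φ_j + Φ_{j−1})². -/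
/-- Backward difference `(DΦ)_j = Φ_j - Φ_{j-1}`. -/
noncomputable def Dd (Φ : ℤ → ℝ) (j : ℤ) : ℝ := Φ j - Φ (j - 1)

/-- Centered difference `(D₀Φ)_j = (Φ_{j+1} - Φ_{j-1})/2`. -/
noncomputable def D0 (Φ : ℤ → ℝ) (j : ℤ) : ℝ := (Φ (j + 1) - Φ (j - 1)) / 2

/-- Discrete Laplacian `(ΔΦ)_j = Φ_{j-1} - 2Φ_j + Φ_{j+1}`. -/
noncomputable def Lap (Φ : ℤ → ℝ) (j : ℤ) : ℝ := Φ (j - 1) - 2 * Φ j + Φ (j + 1)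

/-- The three point scheme `A(z)Φ = Φ - z D₀Φ + (ν/2) ΔΦ`. -/
noncomputable def A3 (z ν : ℝ) (Φ : ℤ → ℝ) (j : ℤ) : ℝ :=
  Φ j - z * D0 Φ j + ν / 2 * Lap Φ j

/-- Telescopic part `T_j` of the three point scheme decomposition. -/
noncomputable def T3 (z ν : ℝ) (Φ : ℤ → ℝ) (j : ℤ) : ℝ :=
  -z * (Φ j) ^ 2 + (ν - z) * Φ j * (Φ (j + 1) - Φ j)
    + ν * (1 - z) / 2 * (Φ (j + 1) - Φ j) ^ 2

/-- Dissipative part `S_j` of the three point scheme decomposition. -/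
noncomputable def S3 (z ν : ℝ) (Φ : ℤ → ℝ) (j : ℤ) : ℝ :=
  (-(ν - z ^ 2) / 2) * ((Φ j - Φ (j - 1)) ^ 2 + (Φ (j + 1) - Φ j) ^ 2)
    + ((ν ^ 2 - z ^ 2) / 4) * (Φ (j + 1) - 2 * Φ j + Φ (j - 1)) ^ 2

/-- Integration-by-parts decomposition for the three point scheme. -/
theorem three_point_decomposition (z ν : ℝ) (Φ : ℤ → ℝ) (Ψ : ℤ → ℝ)
    (hΨ : ∀ j, Ψ j = A3 z ν Φ j) :
    ∀ j : ℤ, (Ψ j) ^ 2 = (Φ j) ^ 2 + T3 z ν Φ j - T3 z ν Φ (j - 1) + S3 z ν Φ j := by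
  intro j
  rw [hΨ j]
  simp only [A3, T3, S3, D0, Lap]
  have h1 : j - 1 + 1 = j := by ring
  rw [h1]
  ring
end

section
/- Let z, ν ∈ ℝ satisfy z² ≤ ν ≤ 1. If Φ : ℤ → ℝ is square-summable (i.e. ∑_{j∈ℤ} Φ_j² < ∞), then the sequence Ψ with Ψ_j := (A(z)Φ)_j is square-summable and ∑_{j∈ℤ} Ψ_j² ≤ ∑_{j∈ℤ} Φ_j²; that is, A(z) is a contraction on ℓ²(ℤ). -/
/-!
Energy method. Pointwise in `j`,
`(AΦ)_j² + ν(1-ν)/4 · (ΔΦ)_j² + (ν - z²) · (D₀Φ)_j² = Φ_j² + F_{j+1} - F_j`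
for a flux `F_j` that is a quadratic form in `Φ_{j-1}, Φ_j`: writing `(AΦ)_j = Φ_j + α(DΦ)_{j+1} - β(DΦ)_j`
with `α = (ν - z)/2`, `β = (ν + z)/2`, the cross terms `2Φ_j(DΦ)_{j+1}`, `2Φ_j(DΦ)_j` telescope up to
`∓(DΦ)²`, and the remaining quadratic form in `(DΦ)_j, (DΦ)_{j+1}` is a telescoping term plus the
negated dissipation. For `z² ≤ ν ≤ 1` the dissipation terms are nonnegative, and for
square-summable `Φ` the flux is summable, so its differences sum to `0`.
-/

lemma HasSum.int_add_one_sub_self {G : Type*} [AddCommGroup G] [TopologicalSpace G]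
    [IsTopologicalAddGroup G] {f : ℤ → G} {a : G} (hf : HasSum f a) :
    HasSum (fun j => f (j + 1) - f j) 0 := by
  simpa using ((Equiv.addRight (1 : ℤ)).hasSum_iff.mpr hf).sub hf

lemma Summable.sq_sub {ι : Type*} {f g : ι → ℝ} (hf : Summable fun i => f i ^ 2)
    (hg : Summable fun i => g i ^ 2) : Summable fun i => (f i - g i) ^ 2 :=
  ((hf.add hg).mul_left 2).of_nonneg_of_le (fun _ => sq_nonneg _) fun i => by
    simpa [sub_eq_add_neg] using add_sq_le (a := f i) (b := -g i)

noncomputable def energyFlux (z ν : ℝ) (Φ : ℤ → ℝ) (j : ℤ) : ℝ :=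
  (ν - z) / 2 * Φ j ^ 2 - (ν + z) / 2 * Φ (j - 1) ^ 2 + z * (1 - ν) / 2 * Dd Φ j ^ 2

lemma sq_A3_add_dissipation (z ν : ℝ) (Φ : ℤ → ℝ) (j : ℤ) :
    A3 z ν Φ j ^ 2 + ν * (1 - ν) / 4 * Lap Φ j ^ 2 + (ν - z ^ 2) * D0 Φ j ^ 2 =
      Φ j ^ 2 + (energyFlux z ν Φ (j + 1) - energyFlux z ν Φ j) := by
  simp only [A3, D0, Lap, energyFlux, Dd, add_sub_cancel_right]
  ring

lemma sq_A3_le (z ν : ℝ) (h1 : z ^ 2 ≤ ν) (h2 : ν ≤ 1) (Φ : ℤ → ℝ) (j : ℤ) :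
    A3 z ν Φ j ^ 2 ≤ Φ j ^ 2 + (energyFlux z ν Φ (j + 1) - energyFlux z ν Φ j) := by
  have hν : 0 ≤ ν := (sq_nonneg z).trans h1
  rw [← sq_A3_add_dissipation]
  have := mul_nonneg (mul_nonneg hν (sub_nonneg.2 h2)) (sq_nonneg (Lap Φ j))
  have := mul_nonneg (sub_nonneg.2 h1) (sq_nonneg (D0 Φ j))
  linarith

lemma summable_energyFlux (z ν : ℝ) {Φ : ℤ → ℝ} (hΦ : Summable fun j => Φ j ^ 2) :
    Summable (energyFlux z ν Φ) := by
  have hΦ' : Summable fun j => Φ (j - 1) ^ 2 := (Equiv.subRight (1 : ℤ)).summable_iff.mpr hΦ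
  have hD : Summable fun j => Dd Φ j ^ 2 := hΦ.sq_sub hΦ'
  exact ((hΦ.mul_left _).sub (hΦ'.mul_left _)).add (hD.mul_left _)

/-- For `z² ≤ ν ≤ 1`, the three point scheme is a contraction on `ℓ²(ℤ)`. -/
theorem three_point_contraction (z ν : ℝ) (h1 : z ^ 2 ≤ ν) (h2 : ν ≤ 1)
    (Φ : ℤ → ℝ) (hΦ : Summable (fun j : ℤ => (Φ j) ^ 2)) :
    Summable (fun j : ℤ => (A3 z ν Φ j) ^ 2) ∧
      ∑' j : ℤ, (A3 z ν Φ j) ^ 2 ≤ ∑' j : ℤ, (Φ j) ^ 2 := by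
  have hbound : HasSum (fun j => Φ j ^ 2 + (energyFlux z ν Φ (j + 1) - energyFlux z ν Φ j))
      (∑' j, Φ j ^ 2) := by
    simpa using hΦ.hasSum.add (summable_energyFlux z ν hΦ).hasSum.int_add_one_sub_self
  have hle := sq_A3_le z ν h1 h2 Φ
  have hA : Summable fun j => A3 z ν Φ j ^ 2 :=
    hbound.summable.of_nonneg_of_le (fun _ => sq_nonneg _) hle
  exact ⟨hA, hasSum_le hle hA.hasSum hbound⟩
end

section
/- Let z, ν ∈ ℝ and set a₁ := −(ν − z²)/2 and a₂ := (ν² − z²)/4. Then the quadratic form (u, v) ↦ a₁·(u² + v²) + a₂·(v − u)² on ℝ² is negative semidefinite (i.e. a₁(u² + v²) + a₂(v − u)² ≤ 0 for all u, v ∈ ℝ) if and only if z² ≤ ν ≤ 1. -/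
/-- The local dissipation quadratic form of the three point scheme is negative
semidefinite if and only if `z² ≤ ν ≤ 1`. -/
theorem three_point_dissipation_negsemidef_iff (z ν : ℝ) :
    (∀ u v : ℝ,
      (-(ν - z ^ 2) / 2) * (u ^ 2 + v ^ 2) + ((ν ^ 2 - z ^ 2) / 4) * (v - u) ^ 2 ≤ 0)
    ↔ (z ^ 2 ≤ ν ∧ ν ≤ 1) := by
  constructor
  · intro h
    have h1 := h 1 1
    have h2 := h 1 (-1)
    constructor
    · nlinarith [sq_nonneg z]
    · nlinarith [sq_nonneg z]
  · rintro ⟨h1, h2⟩ u v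
    have hz : (0:ℝ) ≤ z ^ 2 := sq_nonneg z
    nlinarith [sq_nonneg (u + v), sq_nonneg (u - v),
      mul_nonneg (sub_nonneg.2 h1) (sq_nonneg (u + v)),
      mul_nonneg (mul_nonneg (le_trans hz h1) (sub_nonneg.2 h2)) (sq_nonneg (u - v))]
end

section
/- Let z ∈ (0, 1] and let ν ∈ ℝ satisfy z² ≤ ν ≤ 1. Let Φ : ℤ → ℝ be square-summable over j ≤ 0 (∑_{j ≤ 0} Φ_j² < ∞) and satisfy the first-order extrapolation condition Φ₁ = Φ₀. Define Ψ_j := (A(z)Φ)_j for j ≤ 0. Then ∑_{j ≤ 0} Ψ_j² ≤ ∑_{j ≤ 0} Φ_j² − z·Φ₀². In particular ∑_{j ≤ 0} Ψ_j² ≤ ∑_{j ≤ 0} Φ_j². -/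
open Filter Finset Topology in
set_option maxHeartbeats 1000000 in
lemma key_nat (z ν : ℝ) (hz0 : 0 < z) (hz1 : z ≤ 1) (h1 : z ^ 2 ≤ ν) (h2 : ν ≤ 1)
    (g G ψ : ℕ → ℝ) (hG0 : G 0 = g 0) (hGs : ∀ n, G (n + 1) = g n)
    (hg : Summable (fun n => g n ^ 2))
    (hψ : ∀ n, ψ n = g n + (ν - z) / 2 * (G n - g n) - (ν + z) / 2 * (g n - g (n + 1))) :
    (∑' n, ψ n ^ 2) ≤ (∑' n, g n ^ 2) - z * g 0 ^ 2 := by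
  obtain ⟨p, hp⟩ : ∃ p : ℝ, p = (ν - z) / 2 := ⟨_, rfl⟩
  obtain ⟨q, hq⟩ : ∃ q : ℝ, q = (ν + z) / 2 := ⟨_, rfl⟩
  obtain ⟨E, hE⟩ : ∃ E : ℕ → ℝ, ∀ n, E n = G n - g n := ⟨_, fun _ => rfl⟩
  obtain ⟨e, he⟩ : ∃ e : ℕ → ℝ, ∀ n, e n = g n - g (n + 1) := ⟨_, fun _ => rfl⟩
  -- basic summability
  have hg1 : Summable (fun n => g (n + 1) ^ 2) := (summable_nat_add_iff 1).mpr hg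
  have hG2 : Summable (fun n => G n ^ 2) := by
    apply (summable_nat_add_iff 1).mp
    simpa [hGs] using hg
  have he2 : Summable (fun n => e n ^ 2) := by
    apply Summable.of_nonneg_of_le (fun n => sq_nonneg _) (fun n => ?_) ((hg.add hg1).mul_left 2)
    rw [he n]
    nlinarith [sq_nonneg (g n + g (n + 1))]
  have hE2 : Summable (fun n => E n ^ 2) := by
    apply Summable.of_nonneg_of_le (fun n => sq_nonneg _) (fun n => ?_) ((hG2.add hg).mul_left 2)
    rw [hE n]
    nlinarith [sq_nonneg (G n + g n)]
  have habs : ∀ n, |E n * e n| ≤ (E n ^ 2 + e n ^ 2) / 2 := by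
    intro n
    rw [abs_mul]
    nlinarith [sq_nonneg (|E n| - |e n|), sq_abs (E n), sq_abs (e n)]
  have hEe : Summable (fun n => E n * e n) := by
    apply Summable.of_norm
    apply Summable.of_nonneg_of_le (fun n => norm_nonneg _) (fun n => ?_)
      ((hE2.add he2).div_const 2)
    rw [Real.norm_eq_abs]
    exact habs n
  have hψE : ∀ n, ψ n = g n + p * E n - q * e n := by
    intro n; rw [hψ n, hp, hq, hE n, he n]
  have hψ2 : Summable (fun n => ψ n ^ 2) := by
    apply Summable.of_nonneg_of_le (fun n => sq_nonneg _) (fun n => ?_)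
      (((hg.mul_left 3).add ((hE2.mul_left (3 * p ^ 2)))).add (he2.mul_left (3 * q ^ 2)))
    rw [hψE n]
    nlinarith [sq_nonneg (g n - p * E n), sq_nonneg (g n + q * e n),
      sq_nonneg (p * E n + q * e n)]
  -- tendsto facts
  have hgto : Tendsto (fun n => g n ^ 2) atTop (𝓝 0) := hg.tendsto_atTop_zero
  have hGto : Tendsto (fun n => G n ^ 2) atTop (𝓝 0) := hG2.tendsto_atTop_zero
  -- telescoping sums
  have ht1 : HasSum (fun n => G n ^ 2 - g n ^ 2) (g 0 ^ 2) := by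
    have hsum : Summable (fun n => G n ^ 2 - g n ^ 2) := hG2.sub hg
    rw [hsum.hasSum_iff_tendsto_nat]
    have hps : ∀ N, ∑ i ∈ range N, (G i ^ 2 - g i ^ 2) = G 0 ^ 2 - G N ^ 2 := by
      intro N
      have := Finset.sum_range_sub' (fun n => G n ^ 2) N
      simpa [hGs] using this
    simp only [hps, hG0]
    simpa using tendsto_const_nhds.sub hGto
  have ht2 : HasSum (fun n => g (n + 1) ^ 2 - g n ^ 2) (-(g 0 ^ 2)) := by
    have hsum : Summable (fun n => g (n + 1) ^ 2 - g n ^ 2) := hg1.sub hg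
    rw [hsum.hasSum_iff_tendsto_nat]
    have hps : ∀ N, ∑ i ∈ range N, (g (i + 1) ^ 2 - g i ^ 2) = g N ^ 2 - g 0 ^ 2 :=
      fun N => Finset.sum_range_sub (fun n => g n ^ 2) N
    simp only [hps]
    simpa using hgto.sub tendsto_const_nhds
  -- the pointwise identity
  have hid : ∀ n, ψ n ^ 2 - g n ^ 2 =
      (p * (G n ^ 2 - g n ^ 2) + q * (g (n + 1) ^ 2 - g n ^ 2))
        + ((p ^ 2 - p) * E n ^ 2 + (q ^ 2 - q) * e n ^ 2 - 2 * p * q * (E n * e n)) := by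
    intro n
    rw [hψE n, hE n, he n]
    ring
  -- sums
  obtain ⟨S, hS⟩ : ∃ S : ℝ, S = ∑' n, e n ^ 2 := ⟨_, rfl⟩
  obtain ⟨C, hC⟩ : ∃ C : ℝ, C = ∑' n, E n * e n := ⟨_, rfl⟩
  have hSE : (∑' n, E n ^ 2) = S := by
    rw [Summable.tsum_eq_zero_add hE2]
    have h0 : E 0 = 0 := by rw [hE 0, hG0]; ring
    have hsucc : (fun n => E (n + 1) ^ 2) = fun n => e n ^ 2 := by
      funext n; rw [hE (n + 1), hGs n, he n]
    rw [h0, hsucc, hS]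
    simp
  have hhalf : (∑' n, (E n ^ 2 + e n ^ 2) / 2) = S := by
    rw [tsum_div_const, Summable.tsum_add hE2 he2, hSE, ← hS]
    ring
  have hCle : |C| ≤ S := by
    rw [abs_le]
    constructor
    · calc -S = ∑' n, (-((E n ^ 2 + e n ^ 2) / 2)) := by rw [tsum_neg, hhalf]
        _ ≤ C := by
            rw [hC]
            exact Summable.tsum_le_tsum (fun n => (abs_le.mp (habs n)).1)
              ((hE2.add he2).div_const 2).neg hEe
    · calc C ≤ ∑' n, ((E n ^ 2 + e n ^ 2) / 2) := by
            rw [hC]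
            exact Summable.tsum_le_tsum (fun n => (abs_le.mp (habs n)).2)
              hEe ((hE2.add he2).div_const 2)
        _ = S := hhalf
  have hS0 : 0 ≤ S := hS ▸ tsum_nonneg (fun n => sq_nonneg _)
  -- sum the identity
  have hw : Summable (fun n => (p ^ 2 - p) * E n ^ 2 + (q ^ 2 - q) * e n ^ 2
      - 2 * p * q * (E n * e n)) :=
    ((hE2.mul_left _).add (he2.mul_left _)).sub (hEe.mul_left _)
  have hT : HasSum (fun n => p * (G n ^ 2 - g n ^ 2) + q * (g (n + 1) ^ 2 - g n ^ 2))
      (p * g 0 ^ 2 + q * (-(g 0 ^ 2))) := (ht1.mul_left p).add (ht2.mul_left q)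
  have hwsum : (∑' n, ((p ^ 2 - p) * E n ^ 2 + (q ^ 2 - q) * e n ^ 2
      - 2 * p * q * (E n * e n))) = (p ^ 2 - p) * S + (q ^ 2 - q) * S - 2 * p * q * C := by
    rw [Summable.tsum_sub ((hE2.mul_left _).add (he2.mul_left _)) (hEe.mul_left _),
      Summable.tsum_add (hE2.mul_left _) (he2.mul_left _), tsum_mul_left, tsum_mul_left, tsum_mul_left,
      hSE, ← hS, ← hC]
  have hdiff : (∑' n, ψ n ^ 2) - (∑' n, g n ^ 2) =
      p * g 0 ^ 2 + q * (-(g 0 ^ 2)) +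
        ((p ^ 2 - p) * S + (q ^ 2 - q) * S - 2 * p * q * C) := by
    rw [← Summable.tsum_sub hψ2 hg, tsum_congr hid, Summable.tsum_add hT.summable hw, hT.tsum_eq, hwsum]
  -- the quadratic form bound
  have hQ : (p ^ 2 - p) * S + (q ^ 2 - q) * S - 2 * p * q * C ≤ 0 := by
    have hLHS : (p ^ 2 - p) * S + (q ^ 2 - q) * S - 2 * p * q * C
        = ((ν ^ 2 + z ^ 2) / 2 - ν) * S - (ν ^ 2 - z ^ 2) / 2 * C := by
      rw [hp, hq]; ring
    rw [hLHS]
    have hCub := abs_le.mp hCle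
    rcases le_or_gt z ν with hcase | hcase
    · have aux1 : 0 ≤ (ν ^ 2 - z ^ 2) / 2 * (C + S) :=
        mul_nonneg (by nlinarith) (by linarith [hCub.1])
      have aux2 : 0 ≤ (ν - ν ^ 2) * S := mul_nonneg (by nlinarith) hS0
      nlinarith [aux1, aux2]
    · have aux3 : 0 ≤ (z ^ 2 - ν ^ 2) / 2 * (S - C) :=
        mul_nonneg (by nlinarith) (by linarith [hCub.2])
      have aux4 : 0 ≤ (ν - z ^ 2) * S := mul_nonneg (by linarith) hS0
      nlinarith [aux3, aux4]
  have hfin : p * g 0 ^ 2 + q * (-(g 0 ^ 2)) = -(z * g 0 ^ 2) := by rw [hp, hq]; ring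
  linarith [hdiff, hQ, hfin.le, hfin.ge]

/-- The equivalence between `ℕ` and nonpositive integers. -/
def negEquiv : ℕ ≃ {j : ℤ // j ≤ 0} where
  toFun n := ⟨-(n : ℤ), by simp⟩
  invFun j := (-j.1).toNat
  left_inv n := by simp
  right_inv j := by
    apply Subtype.ext
    have : ((-j.1).toNat : ℤ) = -j.1 := Int.toNat_of_nonneg (by linarith [j.2])
    simp [this]

/-- Semi-boundedness of the three point scheme with first order extrapolation
`Φ₁ = Φ₀` at the outflow boundary. -/
theorem three_point_first_order_extrapolation (z ν : ℝ)
    (hz0 : 0 < z) (hz1 : z ≤ 1) (h1 : z ^ 2 ≤ ν) (h2 : ν ≤ 1)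
    (Φ : ℤ → ℝ) (hΦ : Summable (fun j : {j : ℤ // j ≤ 0} => (Φ j.1) ^ 2))
    (hext : Φ 1 = Φ 0) :
    (∑' j : {j : ℤ // j ≤ 0}, (A3 z ν Φ j.1) ^ 2)
      ≤ (∑' j : {j : ℤ // j ≤ 0}, (Φ j.1) ^ 2) - z * (Φ 0) ^ 2 ∧
    (∑' j : {j : ℤ // j ≤ 0}, (A3 z ν Φ j.1) ^ 2)
      ≤ ∑' j : {j : ℤ // j ≤ 0}, (Φ j.1) ^ 2 := by
  set g : ℕ → ℝ := fun n => Φ (-(n : ℤ)) with hgdef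
  set G : ℕ → ℝ := fun n => Φ (1 - (n : ℤ)) with hGdef
  set ψ : ℕ → ℝ := fun n => A3 z ν Φ (-(n : ℤ)) with hψdef
  have htg : (∑' j : {j : ℤ // j ≤ 0}, (Φ j.1) ^ 2) = ∑' n, g n ^ 2 :=
    (negEquiv.tsum_eq (fun j : {j : ℤ // j ≤ 0} => (Φ j.1) ^ 2)).symm
  have htψ : (∑' j : {j : ℤ // j ≤ 0}, (A3 z ν Φ j.1) ^ 2) = ∑' n, ψ n ^ 2 :=
    (negEquiv.tsum_eq (fun j : {j : ℤ // j ≤ 0} => (A3 z ν Φ j.1) ^ 2)).symm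
  have hsum : Summable (fun n => g n ^ 2) := negEquiv.summable_iff.mpr hΦ
  have hG0 : G 0 = g 0 := by simp [hGdef, hgdef, hext]
  have hGs : ∀ n, G (n + 1) = g n := by
    intro n
    simp only [hGdef, hgdef]
    congr 1
    push_cast
    ring
  have hψeq : ∀ n, ψ n = g n + (ν - z) / 2 * (G n - g n) - (ν + z) / 2 * (g n - g (n + 1)) := by
    intro n
    simp only [hψdef, hgdef, hGdef, A3, D0, Lap]
    have e1 : (-(n : ℤ)) + 1 = 1 - (n : ℤ) := by ring
    have e2 : (-(n : ℤ)) - 1 = -((n : ℕ) + 1 : ℕ) := by push_cast; ring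
    rw [e1, e2]
    ring
  have hg0 : g 0 = Φ 0 := by simp [hgdef]
  have key := key_nat z ν hz0 hz1 h1 h2 g G ψ hG0 hGs hsum hψeq
  rw [htg, htψ, ← hg0]
  constructor
  · exact key
  · nlinarith [sq_nonneg (g 0), key]
end
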